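/- Consider the high-dimensional MA(∞) process e_t = Σ_{j=0}^∞ B_j ε_{t−j}, where the B_j are N×N matrices with |B_j|_2 = O(j^{−α_e}) for some α_e > 2, and {ε_{it}} are independent over i and t with E ε_{it} = 0 and E|ε_{it}|^q < ∞ for some q > 2. Then the functional dependence measure of the cross-sectional average satisfies δ_q(e,k) := ‖ (1/√N) Σ_{i=1}^N (e_{ik} − e*_{ik}) ‖_q = O(k^{−α_e}), where e*_t denotes the coupled process in which the innovation vector ε_0 is replaced by an independent copy ε*_0. -/

import Mathlib

open MeasureTheory ProbabilityTheory Filter Finset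
open scoped BigOperators ENNReal NNReal Topology Classical

noncomputable section

namespace GPY

variable {Ω : Type*} [MeasurableSpace Ω] {E : Type*} [MeasurableSpace E]

/-- The `L^q` norm `(E |X|^q)^{1/q}` of a real random variable. -/
def lqNorm (P : Measure Ω) (q : ℝ) (X : Ω → ℝ) : ℝ :=
  (∫ ω, |X ω| ^ q ∂P) ^ (1 / q)

/-- The trajectory `F_t = (ε_t, ε_{t-1}, …)` of the innovation process. -/
def traj (ε : ℤ → Ω → E) (t : ℤ) (ω : Ω) : ℕ → E := fun n => ε (t - (n : ℤ)) ω

/-- The coupled trajectory `F*_t`, in which the innovation `ε_0` is replaced by the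
independent copy `εs`. -/
def trajStar (ε : ℤ → Ω → E) (εs : Ω → E) (t : ℤ) (ω : Ω) : ℕ → E :=
  fun n => if t - (n : ℤ) = 0 then εs ω else ε (t - (n : ℤ)) ω

/-- The innovations `ε` (indexed by `ℤ`) together with the independent copy `εs`
form an i.i.d. family. -/
structure IIDInnovations (P : Measure Ω) (ε : ℤ → Ω → E) (εs : Ω → E) : Prop where
  meas : ∀ k, Measurable (ε k)
  measStar : Measurable εs
  indep : iIndepFun (Sum.elim ε fun _ : Unit => εs) P
  ident : ∀ k : ℤ ⊕ Unit, IdentDistrib (Sum.elim ε (fun _ => εs) k) (ε 0) P P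

/-- Cross-sectionally averaged process `ū_t = N^{-1/2} Σ_i u_i(F_t)`. -/
def ubar (ε : ℤ → Ω → E) {N : ℕ} (u : Fin N → (ℕ → E) → ℝ) (t : ℤ) (ω : Ω) : ℝ :=
  (Real.sqrt N)⁻¹ * ∑ i, u i (traj ε t ω)

/-- The functional dependence measure
`δ_q(u, t) = ‖ N^{-1/2} Σ_i (u_i(F_t) - u_i(F*_t)) ‖_q`. -/
def fdm (P : Measure Ω) (ε : ℤ → Ω → E) (εs : Ω → E) (q : ℝ)
    {N : ℕ} (u : Fin N → (ℕ → E) → ℝ) (t : ℕ) : ℝ :=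
  lqNorm P q fun ω =>
    (Real.sqrt N)⁻¹ * ∑ i, (u i (traj ε (t : ℤ) ω) - u i (trajStar ε εs (t : ℤ) ω))

/-- Tail sum `Δ_q(u, m) = Σ_{k ≥ m} δ_q(u, k)`. -/
def fdmTail (P : Measure Ω) (ε : ℤ → Ω → E) (εs : Ω → E) (q : ℝ)
    {N : ℕ} (u : Fin N → (ℕ → E) → ℝ) (m : ℕ) : ℝ :=
  ∑' k : ℕ, fdm P ε εs q u (m + k)

section LinearAlgebra

variable {ι κ : Type*} [Fintype ι] [Fintype κ]

/-- `ℓ1` norm of a vector. -/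
def l1norm (v : ι → ℝ) : ℝ := ∑ i, |v i|

/-- Euclidean norm of a vector. -/
def l2norm (v : ι → ℝ) : ℝ := Real.sqrt (∑ i, v i ^ 2)

/-- Euclidean inner product. -/
def dotp (v w : ι → ℝ) : ℝ := ∑ i, v i * w i

/-- Spectral (operator `ℓ2`) norm of a matrix. -/
def specNorm (A : Matrix ι κ ℝ) : ℝ :=
  sSup {r : ℝ | ∃ v : κ → ℝ, l2norm v = 1 ∧ r = l2norm (A.mulVec v)}

/-- Smallest singular value of a matrix. -/
def minSingular (A : Matrix ι κ ℝ) : ℝ :=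
  sInf {r : ℝ | ∃ v : κ → ℝ, l2norm v = 1 ∧ r = l2norm (A.mulVec v)}

/-- Frobenius norm of a matrix. -/
def frobNorm (A : Matrix ι κ ℝ) : ℝ := Real.sqrt (∑ i, ∑ j, A i j ^ 2)

/-- Entrywise max norm of a matrix. -/
def maxNorm (A : Matrix ι κ ℝ) : ℝ := ⨆ i, ⨆ j, |A i j|

/-- `k`-th largest entry (0-indexed: `k = 0` is the largest) of a finite family of reals. -/
def kthLargest (v : ι → ℝ) (k : ℕ) : ℝ :=
  sSup {r : ℝ | k + 1 ≤ (Finset.univ.filter fun i => r ≤ v i).card}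

/-- `k`-th largest singular value (0-indexed) of a matrix. -/
def singVal [DecidableEq κ] (A : Matrix ι κ ℝ) (k : ℕ) : ℝ :=
  kthLargest (fun i => Real.sqrt ((show (A.transpose * A).IsHermitian by simpa using Matrix.isHermitian_conjTranspose_mul_self A).eigenvalues i)) k

/-- Nuclear norm of a matrix: the sum of its singular values. -/
def nuclearNorm [DecidableEq κ] (A : Matrix ι κ ℝ) : ℝ :=
  ∑ i, Real.sqrt ((show (A.transpose * A).IsHermitian by simpa using Matrix.isHermitian_conjTranspose_mul_self A).eigenvalues i)

end LinearAlgebra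

/-- `X_n = O_P(a_n)` along a filter `l`. -/
def IsBigOP {α : Type*} (l : Filter α) (P : Measure Ω) (X : α → Ω → ℝ) (a : α → ℝ) : Prop :=
  ∀ δ : ℝ, 0 < δ → ∃ M : ℝ, 0 < M ∧ ∀ᶠ n in l, (P {ω | M * |a n| < |X n ω|}).toReal < δ

/-- Convergence in probability to a constant. -/
def TendstoInProb {α : Type*} (l : Filter α) (P : Measure Ω) (X : α → Ω → ℝ) (c : ℝ) : Prop :=
  ∀ δ : ℝ, 0 < δ → Tendsto (fun n => (P {ω | δ ≤ |X n ω - c|}).toReal) l (𝓝 0)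

/-- Convergence in distribution to a Gaussian law, expressed through the
pointwise convergence of distribution functions. -/
def TendstoGaussian {α : Type*} (l : Filter α) (P : Measure Ω) (Z : α → Ω → ℝ)
    (m : ℝ) (v : ℝ≥0) : Prop :=
  ∀ x : ℝ, Tendsto (fun n => (P {ω | Z n ω ≤ x}).toReal) l
    (𝓝 ((gaussianReal m v (Set.Iic x)).toReal))

end GPY
open GPY

/-!
Only the `k`-th terms of the two MA(∞) series differ, so when the series converges the
difference of the cross-sectional averages is `c ⬝ᵥ (ε₀ - ε*₀)` with
`c = N^{-1/2} (1ᵀ B_k)`, and `∑ i, |c i| ≤ N^{3/2} |B_k|₂`. Minkowski's inequality then bounds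
its `L^q` norm by `2 max_i ‖ε_{0i}‖_q ∑ i, |c i| = O(k^{-α_e})`.

Lean's junk values make two further points necessary, both settled by independence. A
divergent series has sum `0`, so the integrand is `1_S · (c ⬝ᵥ (ε₀ - ε*₀))` for the convergence
event `S`; `S` does not depend on `ε₀, ε*₀`, so it is independent of the other factor and can
only shrink its `L^q` norm. And `∫ |ε_{0i}|^q ≤ K` says nothing when `ε_{0i} ∉ L^q`; but if
`c ⬝ᵥ (ε₀ - ε*₀) ∈ L^q`, every `ε_{0i}` with `c i ≠ 0` is in `L^q`, because a sum of
independent random variables lies in `L^q` only if each summand does.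
-/

open scoped Matrix

section Series

open Function

theorem summable_update_iff {β α : Type*} [AddCommGroup α] [TopologicalSpace α]
    [IsTopologicalAddGroup α] [DecidableEq β] {f : β → α} {b : β} {a : α} :
    Summable (update f b a) ↔ Summable f :=
  ⟨fun h => by simpa using h.update b (f b), fun h => h.update b a⟩

theorem tsum_sub_tsum_update {β α : Type*} [AddCommGroup α] [TopologicalSpace α]
    [IsTopologicalAddGroup α] [T2Space α] [DecidableEq β] (f : β → α) (b : β) (a : α) :
    ∑' j, f j - ∑' j, update f b a j = if Summable f then f b - a else 0 := by
  split_ifs with hf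
  · rw [(hf.hasSum.update b a).tsum_eq]
    abel
  · rw [tsum_eq_zero_of_not_summable hf,
      tsum_eq_zero_of_not_summable (summable_update_iff.not.mpr hf), sub_zero]

theorem measurableSet_summable {Ω E : Type*} {m : MeasurableSpace Ω} [NormedAddCommGroup E]
    [NormedSpace ℝ E] [FiniteDimensional ℝ E] [MeasurableSpace E] [OpensMeasurableSpace E]
    {f : ℕ → Ω → E} (hf : ∀ j, Measurable (f j)) :
    MeasurableSet {ω | Summable fun j => f j ω} := by
  have key (ω : Ω) : Summable (fun j => f j ω) ↔
      ∃ c, Tendsto (fun n => ∑ j ∈ range n, ‖f j ω‖) atTop (𝓝 c) := by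
    rw [← summable_norm_iff]
    exact exists_congr fun c => hasSum_iff_tendsto_nat_of_nonneg (fun j => norm_nonneg _) c
  simp_rw [key]
  exact StronglyMeasurable.measurableSet_exists_tendsto fun n =>
    (Finset.measurable_sum _ fun j _ => (hf j).norm).stronglyMeasurable

theorem sum_tsum_sub_tsum_coupled {ι κ : Type*} [Fintype ι] [Fintype κ]
    (B : ℕ → Matrix ι κ ℝ) (k : ℕ) (ε : ℤ → κ → ℝ) (ε' : κ → ℝ) :
    ∑ i, ((∑' j : ℕ, (B j).mulVec (ε ((k : ℤ) - j))) i -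
      (∑' j : ℕ, (B j).mulVec
        (fun i' => if (k : ℤ) - j = 0 then ε' i' else ε ((k : ℤ) - j) i')) i)
      = if Summable (fun j : ℕ => (B j).mulVec (ε ((k : ℤ) - j)))
        then (1 ᵥ* B k) ⬝ᵥ (ε 0 - ε') else 0 := by
  have hcoupled : (fun j : ℕ =>
      (B j).mulVec (fun i' => if (k : ℤ) - j = 0 then ε' i' else ε ((k : ℤ) - j) i')) =
      update (fun j : ℕ => (B j).mulVec (ε ((k : ℤ) - j))) k ((B k).mulVec ε') := by
    ext j : 1
    rcases eq_or_ne j k with rfl | hj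
    · simp
    · simp [update_of_ne hj, sub_eq_zero, Ne.symm hj]
  rw [hcoupled, show ∀ a b : ι → ℝ, ∑ i, (a i - b i) = ∑ i, (a - b) i from fun _ _ => rfl,
    tsum_sub_tsum_update]
  split_ifs
  · rw [sub_self, ← Matrix.mulVec_sub, ← Matrix.dotProduct_mulVec]
    simp [dotProduct]
  · simp

theorem mul_sum_tsum_sub_tsum_coupled {Ω ι κ : Type*} [Fintype ι] [Fintype κ] (a : ℝ)
    (B : ℕ → Matrix ι κ ℝ) (k : ℕ) (ε : ℤ → Ω → κ → ℝ) (ε' : Ω → κ → ℝ) :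
    (fun ω => a * ∑ i, ((∑' j : ℕ, (B j).mulVec (ε ((k : ℤ) - j) ω)) i -
      (∑' j : ℕ, (B j).mulVec
        (fun i' => if (k : ℤ) - j = 0 then ε' ω i' else ε ((k : ℤ) - j) ω i')) i))
      = {ω | Summable fun j : ℕ => (B j).mulVec (ε ((k : ℤ) - j) ω)}.indicator
        fun ω => (a • (1 ᵥ* B k)) ⬝ᵥ (ε 0 ω - ε' ω) := by
  ext ω
  rw [sum_tsum_sub_tsum_coupled B k (ε · ω) (ε' ω), Set.indicator_apply, mul_ite, mul_zero]
  simp only [Set.mem_ofPred_eq, smul_dotProduct, smul_eq_mul]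

end Series

section Lp

variable {Ω : Type*}

theorem ProbabilityTheory.IndepFun.memLp_left_of_memLp_add [MeasurableSpace Ω]
    {P : Measure Ω} [IsProbabilityMeasure P] {E : Type*} [NormedAddCommGroup E]
    [MeasurableSpace E] [BorelSpace E] [SecondCountableTopology E] {U V : Ω → E}
    {p : ℝ≥0∞} (hp0 : p ≠ 0) (hp : p ≠ ∞) (hU : AEMeasurable U P) (hV : AEMeasurable V P)
    (hUV : IndepFun U V P) (h : MemLp (U + V) p P) : MemLp U p P := by
  have : IsProbabilityMeasure (P.map V) := Measure.isProbabilityMeasure_map hV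
  have hsum : MemLp (fun z : E × E => z.1 + z.2) p ((P.map U).prod (P.map V)) := by
    rw [← (indepFun_iff_map_prod_eq_prod_map_map hU hV).mp hUV,
      memLp_map_measure_iff (by fun_prop) (hU.prodMk hV)]
    exact h
  -- Fubini: for almost every value `y` of `V`, the shift `x ↦ x + y` is in `L^p` of the law of `U`.
  obtain ⟨y, hy⟩ := (hsum.integrable_norm_rpow hp0 hp).prod_left_ae.exists
  have hshift : MemLp (fun x => x + y) p (P.map U) :=
    (integrable_norm_rpow_iff (by fun_prop) hp0 hp).mp hy
  have hid : MemLp id p (P.map U) := by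
    convert hshift.sub (memLp_const y) using 1
    ext x
    simp
  exact (memLp_map_measure_iff aestronglyMeasurable_id hU).mp hid

theorem ProbabilityTheory.iIndepFun.memLp_of_memLp_sum_smul [MeasurableSpace Ω]
    {P : Measure Ω} [IsProbabilityMeasure P] {ι E : Type*} [NormedAddCommGroup E]
    [NormedSpace ℝ E] [MeasurableSpace E] [BorelSpace E] [SecondCountableTopology E]
    {F : ι → Ω → E} (hF : iIndepFun F P) (hFm : ∀ i, Measurable (F i)) {p : ℝ≥0∞}
    (hp0 : p ≠ 0) (hp : p ≠ ∞) {s : Finset ι} {a : ι → ℝ} {i₀ : ι} (hi₀ : i₀ ∈ s)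
    (ha : a i₀ ≠ 0) (h : MemLp (fun ω => ∑ i ∈ s, a i • F i ω) p P) : MemLp (F i₀) p P := by
  set G : ι → Ω → E := fun i ω => a i • F i ω
  have hGm (i : ι) : Measurable (G i) := (hFm i).const_smul (a i)
  have hG : iIndepFun G P := hF.comp (fun i x => a i • x) fun i => measurable_const_smul (a i)
  have hsplit : (fun ω => ∑ i ∈ s, a i • F i ω) = G i₀ + ∑ j ∈ s.erase i₀, G j := by
    ext ω
    rw [← Finset.add_sum_erase s _ hi₀]
    simp [G, Finset.sum_apply]
  rw [hsplit] at h
  have hG₀ : MemLp (G i₀) p P :=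
    IndepFun.memLp_left_of_memLp_add hp0 hp (hGm i₀).aemeasurable
      (by simpa only [← Finset.sum_apply] using
        (Finset.measurable_sum (s.erase i₀) fun j _ => hGm j).aemeasurable)
      (hG.indepFun_finsetSum_of_notMem hGm (s.notMem_erase i₀)).symm h
  convert hG₀.const_smul (a i₀)⁻¹ using 1
  ext ω
  simp [G, smul_smul, inv_mul_cancel₀ ha]

theorem eLpNorm_indicator_eq_of_indep {m₁ m₂ mΩ : MeasurableSpace Ω} {P : Measure Ω}
    {E : Type*} [NormedAddCommGroup E] [MeasurableSpace E] [OpensMeasurableSpace E]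
    (hm₁ : m₁ ≤ mΩ) (hm₂ : m₂ ≤ mΩ) (hind : Indep m₁ m₂ P) {Y : Ω → E}
    (hY : Measurable[m₁] Y) {S : Set Ω} (hS : MeasurableSet[m₂] S) {p : ℝ≥0∞}
    (hp0 : p ≠ 0) (hp : p ≠ ∞) :
    eLpNorm (S.indicator Y) p P = P S ^ (1 / p.toReal) * eLpNorm Y p P := by
  have hq : 0 < p.toReal := ENNReal.toReal_pos hp0 hp
  have hsplit (ω : Ω) :
      ‖S.indicator Y ω‖ₑ ^ p.toReal = ‖Y ω‖ₑ ^ p.toReal * S.indicator 1 ω := by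
    by_cases hω : ω ∈ S <;> simp [hω, hq]
  have hlint :
      ∫⁻ ω, ‖S.indicator Y ω‖ₑ ^ p.toReal ∂P = (∫⁻ ω, ‖Y ω‖ₑ ^ p.toReal ∂P) * P S := by
    have hYq : Measurable[m₁] fun ω => ‖Y ω‖ₑ ^ p.toReal := (measurable_enorm.comp hY).pow_const _
    have hS1 : Measurable[m₂] (S.indicator (1 : Ω → ℝ≥0∞)) := measurable_const.indicator hS
    simp_rw [hsplit]
    rw [lintegral_mul_eq_lintegral_mul_lintegral_of_independent_measurableSpace hm₁ hm₂ hind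
      hYq hS1, lintegral_indicator_one (hm₂ _ hS)]
  rw [eLpNorm_eq_lintegral_rpow_enorm_toReal hp0 hp, eLpNorm_eq_lintegral_rpow_enorm_toReal hp0 hp,
    hlint, ENNReal.mul_rpow_of_nonneg _ _ (by positivity), mul_comm]

theorem toReal_eLpNorm_indicator_le_of_indep {m₁ m₂ mΩ : MeasurableSpace Ω} {P : Measure Ω}
    [IsProbabilityMeasure P] {E : Type*} [NormedAddCommGroup E] [MeasurableSpace E]
    [OpensMeasurableSpace E] (hm₁ : m₁ ≤ mΩ) (hm₂ : m₂ ≤ mΩ) (hind : Indep m₁ m₂ P)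
    {Y : Ω → E} (hY : Measurable[m₁] Y) {S : Set Ω} (hS : MeasurableSet[m₂] S)
    {p : ℝ≥0∞} (hp0 : p ≠ 0) (hp : p ≠ ∞) :
    (eLpNorm (S.indicator Y) p P).toReal ≤ (eLpNorm Y p P).toReal := by
  rw [eLpNorm_indicator_eq_of_indep hm₁ hm₂ hind hY hS hp0 hp, ENNReal.toReal_mul]
  refine mul_le_of_le_one_left ENNReal.toReal_nonneg ?_
  exact ENNReal.toReal_le_of_le_ofReal zero_le_one
    (by simpa using ENNReal.rpow_le_one prob_le_one (by positivity))

theorem eLpNorm_dotProduct_sub_le [MeasurableSpace Ω] {P : Measure Ω} {ι : Type*} [Fintype ι]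
    {p : ℝ≥0∞} (hp : 1 ≤ p) (c : ι → ℝ) {U V : Ω → ι → ℝ}
    (hU : ∀ i, AEStronglyMeasurable (fun ω => U ω i) P)
    (hV : ∀ i, AEStronglyMeasurable (fun ω => V ω i) P) :
    eLpNorm (fun ω => c ⬝ᵥ (U ω - V ω)) p P ≤
      ∑ i, ‖c i‖ₑ * (eLpNorm (fun ω => U ω i) p P + eLpNorm (fun ω => V ω i) p P) := by
  have hsum : (fun ω => c ⬝ᵥ (U ω - V ω)) =
      ∑ i, c i • ((fun ω => U ω i) - fun ω => V ω i) := by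
    ext ω
    simp [dotProduct, Finset.sum_apply]
  rw [hsum]
  refine (eLpNorm_sum_le (fun i _ => ((hU i).sub (hV i)).const_smul (c i)) hp).trans ?_
  gcongr with i
  rw [eLpNorm_const_smul]
  gcongr
  exact eLpNorm_sub_le (hU i) (hV i) hp

end Lp

namespace GPY

section Norms

variable {Ω : Type*} [MeasurableSpace Ω] {P : Measure Ω}

theorem lqNorm_eq_toReal_eLpNorm {q : ℝ} (hq : 0 < q) {X : Ω → ℝ}
    (hX : AEStronglyMeasurable X P) :
    lqNorm P q X = (eLpNorm X (ENNReal.ofReal q) P).toReal := by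
  rw [lqNorm, eLpNorm_eq_lintegral_rpow_enorm_toReal (by simpa using hq) ENNReal.ofReal_ne_top,
    ENNReal.toReal_ofReal hq.le, ← ENNReal.toReal_rpow, integral_eq_lintegral_of_nonneg_ae
      (ae_of_all _ fun ω => by positivity) (hX.aemeasurable.abs.pow_const q).aestronglyMeasurable]
  congr 2
  refine lintegral_congr fun ω => ?_
  rw [Real.enorm_eq_ofReal_abs, ENNReal.ofReal_rpow_of_nonneg (abs_nonneg _) hq.le]

theorem eLpNorm_le_of_integral_rpow_le {q K : ℝ} (hq : 0 < q) {X : Ω → ℝ}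
    (hX : MemLp X (ENNReal.ofReal q) P) (hK : ∫ ω, |X ω| ^ q ∂P ≤ K) :
    eLpNorm X (ENNReal.ofReal q) P ≤ ENNReal.ofReal (K ^ (1 / q)) := by
  rw [← ENNReal.ofReal_toReal hX.eLpNorm_ne_top, ← lqNorm_eq_toReal_eLpNorm hq hX.1]
  exact ENNReal.ofReal_le_ofReal
    (Real.rpow_le_rpow (integral_nonneg fun ω => by positivity) hK (by positivity))

end Norms

section SpecNorm

variable {ι κ : Type*} [Fintype ι] [Fintype κ]

theorem l2norm_eq_norm (v : ι → ℝ) : l2norm v = ‖WithLp.toLp 2 v‖ := by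
  simp [l2norm, EuclideanSpace.norm_eq]

open scoped Matrix.Norms.L2Operator in
theorem bddAbove_specNorm_set (A : Matrix ι κ ℝ) :
    BddAbove {r : ℝ | ∃ v : κ → ℝ, l2norm v = 1 ∧ r = l2norm (A.mulVec v)} := by
  refine ⟨‖A‖, ?_⟩
  rintro r ⟨v, hv, rfl⟩
  have := A.l2_opNorm_mulVec ((EuclideanSpace.equiv κ ℝ).symm v)
  simpa [← l2norm_eq_norm, hv] using this

theorem abs_le_specNorm [DecidableEq κ] (A : Matrix ι κ ℝ) (i : ι) (j : κ) :
    |A i j| ≤ specNorm A := by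
  have hcol : l2norm (A.mulVec (Pi.single j 1)) ≤ specNorm A :=
    le_csSup (bddAbove_specNorm_set A) ⟨Pi.single j 1, by simp [l2norm_eq_norm], rfl⟩
  refine le_trans ?_ hcol
  rw [Matrix.mulVec_single_one, l2norm, ← Real.sqrt_sq_eq_abs]
  exact Real.sqrt_le_sqrt
    (Finset.single_le_sum (f := fun i' => A i' j ^ 2) (fun i' _ => sq_nonneg _) (mem_univ i))

theorem sum_abs_smul_one_vecMul_le [DecidableEq κ] (a : ℝ) (A : Matrix ι κ ℝ) :
    ∑ j, |(a • (1 ᵥ* A)) j| ≤ |a| * (Fintype.card κ * (Fintype.card ι * specNorm A)) := by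
  have hcol (j : κ) : |(1 ᵥ* A) j| ≤ Fintype.card ι * specNorm A := by
    simp only [Matrix.vecMul, dotProduct, Pi.one_apply, one_mul]
    refine (Finset.abs_sum_le_sum_abs _ _).trans ?_
    calc ∑ i, |A i j| ≤ ∑ _i : ι, specNorm A :=
          Finset.sum_le_sum fun i _ => abs_le_specNorm A i j
      _ = Fintype.card ι * specNorm A := by simp
  simp only [Pi.smul_apply, smul_eq_mul, abs_mul, ← Finset.mul_sum]
  gcongr
  calc ∑ j, |(1 ᵥ* A) j| ≤ ∑ _j : κ, Fintype.card ι * specNorm A :=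
        Finset.sum_le_sum fun j _ => hcol j
    _ = Fintype.card κ * (Fintype.card ι * specNorm A) := by simp

end SpecNorm

section Innovations

variable {Ω : Type*} {N : ℕ}

def innov (εv : ℤ → Ω → Fin N → ℝ) (εsv : Ω → Fin N → ℝ) : (ℤ ⊕ Unit) × Fin N → Ω → ℝ :=
  fun p ω => Sum.elim εv (fun _ => εsv) p.1 ω p.2

def zeroBlock (N : ℕ) : Set ((ℤ ⊕ Unit) × Fin N) := {p | p.1 = Sum.inl 0 ∨ p.1 = Sum.inr ()}

abbrev innovσ (εv : ℤ → Ω → Fin N → ℝ) (εsv : Ω → Fin N → ℝ)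
    (T : Set ((ℤ ⊕ Unit) × Fin N)) : MeasurableSpace Ω :=
  ⨆ p ∈ T, MeasurableSpace.comap (innov εv εsv p) inferInstance

variable {εv : ℤ → Ω → Fin N → ℝ} {εsv : Ω → Fin N → ℝ}

theorem measurable_innov [MeasurableSpace Ω] (hmeas : ∀ t, Measurable (εv t))
    (hmeas' : Measurable εsv) (p : (ℤ ⊕ Unit) × Fin N) : Measurable (innov εv εsv p) := by
  rcases p with ⟨t | u, i⟩
  · exact (measurable_pi_apply i).comp (hmeas t)
  · exact (measurable_pi_apply i).comp hmeas'

theorem innovσ_le [MeasurableSpace Ω] (hmeas : ∀ t, Measurable (εv t))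
    (hmeas' : Measurable εsv) (T : Set ((ℤ ⊕ Unit) × Fin N)) :
    innovσ εv εsv T ≤ ‹MeasurableSpace Ω› :=
  iSup₂_le fun p _ => (measurable_innov hmeas hmeas' p).comap_le

theorem measurable_innov_innovσ {T : Set ((ℤ ⊕ Unit) × Fin N)} {p : (ℤ ⊕ Unit) × Fin N}
    (hp : p ∈ T) : Measurable[innovσ εv εsv T] (innov εv εsv p) :=
  Measurable.of_comap_le
    (le_iSup₂ (f := fun p (_ : p ∈ T) => MeasurableSpace.comap (innov εv εsv p) inferInstance) p hp)

theorem indep_innovσ_compl [MeasurableSpace Ω] {P : Measure Ω} (hmeas : ∀ t, Measurable (εv t))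
    (hmeas' : Measurable εsv) (hindep : iIndepFun (innov εv εsv) P)
    (T : Set ((ℤ ⊕ Unit) × Fin N)) : Indep (innovσ εv εsv T) (innovσ εv εsv Tᶜ) P :=
  indep_iSup_of_disjoint (fun p => (measurable_innov hmeas hmeas' p).comap_le) hindep
    disjoint_compl_right

theorem measurable_dotProduct_coupling (c : Fin N → ℝ) :
    Measurable[innovσ εv εsv (zeroBlock N)] fun ω => c ⬝ᵥ (εv 0 ω - εsv ω) := by
  let _ : MeasurableSpace Ω := innovσ εv εsv (zeroBlock N)
  refine Finset.measurable_sum _ fun i _ => (Measurable.sub ?_ ?_).const_mul (c i)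
  · exact measurable_innov_innovσ (p := (Sum.inl 0, i)) (Or.inl rfl)
  · exact measurable_innov_innovσ (p := (Sum.inr (), i)) (Or.inr rfl)

open Function in
theorem measurableSet_summable_innovσ (B : ℕ → Matrix (Fin N) (Fin N) ℝ) (k : ℕ) :
    MeasurableSet[innovσ εv εsv (zeroBlock N)ᶜ]
      {ω | Summable fun j : ℕ => (B j).mulVec (εv ((k : ℤ) - j) ω)} := by
  let _ : MeasurableSpace Ω := innovσ εv εsv (zeroBlock N)ᶜ
  -- The `j = k` term involves `ε₀`; dropping it does not change summability.
  have hS : {ω | Summable fun j : ℕ => (B j).mulVec (εv ((k : ℤ) - j) ω)} =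
      {ω | Summable (update (fun j : ℕ => (B j).mulVec (εv ((k : ℤ) - j) ω)) k 0)} := by
    ext ω
    exact summable_update_iff.symm
  rw [hS]
  refine measurableSet_summable fun j => ?_
  rcases eq_or_ne j k with rfl | hj
  · simp
  simp only [update_of_ne hj]
  refine measurable_pi_lambda _ fun i => ?_
  simp only [Matrix.mulVec, dotProduct]
  refine Finset.measurable_sum _ fun i' _ => ?_
  refine (measurable_innov_innovσ (p := (Sum.inl ((k : ℤ) - j), i')) ?_).const_mul _
  simp [zeroBlock]
  omega

theorem dotProduct_coupling_eq_sum_innov (c : Fin N → ℝ) (ω : Ω) :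
    c ⬝ᵥ (εv 0 ω - εsv ω) = ∑ p ∈ ({Sum.inl 0, Sum.inr ()} : Finset (ℤ ⊕ Unit)) ×ˢ univ,
      Sum.elim (fun _ => c p.2) (fun _ => -c p.2) p.1 • innov εv εsv p ω := by
  rw [Finset.sum_product, Finset.sum_pair Sum.inl_ne_inr, dotProduct_sub, sub_eq_add_neg]
  simp [innov, dotProduct]

variable [MeasurableSpace Ω] {P : Measure Ω} [IsProbabilityMeasure P]

theorem memLp_innov_zero_of_memLp (hmeas : ∀ t, Measurable (εv t)) (hmeas' : Measurable εsv)
    (hindep : iIndepFun (innov εv εsv) P) {p : ℝ≥0∞} (hp0 : p ≠ 0) (hp : p ≠ ∞)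
    {c : Fin N → ℝ} (hY : MemLp (fun ω => c ⬝ᵥ (εv 0 ω - εsv ω)) p P) {i : Fin N}
    (hc : c i ≠ 0) : MemLp (fun ω => εv 0 ω i) p P := by
  simp_rw [dotProduct_coupling_eq_sum_innov] at hY
  exact hindep.memLp_of_memLp_sum_smul (measurable_innov hmeas hmeas') hp0 hp
    (i₀ := (Sum.inl 0, i)) (by simp) hc hY

theorem eLpNorm_dotProduct_coupling_le (hmeas : ∀ t, Measurable (εv t))
    (hmeas' : Measurable εsv) (hindep : iIndepFun (innov εv εsv) P)
    (hcopy : ∀ i, IdentDistrib (fun ω => εsv ω i) (fun ω => εv 0 ω i) P P)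
    {q K : ℝ} (hq : 1 ≤ q) (hK0 : 0 ≤ K) (hK : ∀ i, ∫ ω, |εv 0 ω i| ^ q ∂P ≤ K)
    {c : Fin N → ℝ} (hY : MemLp (fun ω => c ⬝ᵥ (εv 0 ω - εsv ω)) (ENNReal.ofReal q) P) :
    eLpNorm (fun ω => c ⬝ᵥ (εv 0 ω - εsv ω)) (ENNReal.ofReal q) P ≤
      ENNReal.ofReal (∑ i, |c i| * (2 * K ^ (1 / q))) := by
  have hq0 : 0 < q := by linarith
  have hM : 0 ≤ K ^ (1 / q) := Real.rpow_nonneg hK0 _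
  have hε (i : Fin N) (hc : c i ≠ 0) :
      eLpNorm (fun ω => εv 0 ω i) (ENNReal.ofReal q) P ≤ ENNReal.ofReal (K ^ (1 / q)) :=
    eLpNorm_le_of_integral_rpow_le hq0 (memLp_innov_zero_of_memLp hmeas hmeas' hindep
      (by simpa using hq0) ENNReal.ofReal_ne_top hY hc) (hK i)
  calc eLpNorm (fun ω => c ⬝ᵥ (εv 0 ω - εsv ω)) (ENNReal.ofReal q) P
      ≤ ∑ i, ‖c i‖ₑ * (eLpNorm (fun ω => εv 0 ω i) (ENNReal.ofReal q) P +
          eLpNorm (fun ω => εsv ω i) (ENNReal.ofReal q) P) :=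
        eLpNorm_dotProduct_sub_le (by simpa using hq) c
          (fun i => ((measurable_pi_apply i).comp (hmeas 0)).aestronglyMeasurable)
          (fun i => ((measurable_pi_apply i).comp hmeas').aestronglyMeasurable)
    _ ≤ ∑ i, ‖c i‖ₑ * (ENNReal.ofReal (K ^ (1 / q)) + ENNReal.ofReal (K ^ (1 / q))) := by
        refine Finset.sum_le_sum fun i _ => ?_
        rcases eq_or_ne (c i) 0 with hc | hc
        · simp [hc]
        rw [(hcopy i).eLpNorm_eq]
        gcongr <;> exact hε i hc
    _ = ENNReal.ofReal (∑ i, |c i| * (2 * K ^ (1 / q))) := by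
        rw [ENNReal.ofReal_sum_of_nonneg fun i _ => by positivity]
        refine Finset.sum_congr rfl fun i _ => ?_
        rw [ENNReal.ofReal_mul (abs_nonneg _), ← Real.enorm_eq_ofReal_abs, two_mul,
          ENNReal.ofReal_add hM hM]

theorem toReal_eLpNorm_dotProduct_coupling_le (hmeas : ∀ t, Measurable (εv t))
    (hmeas' : Measurable εsv) (hindep : iIndepFun (innov εv εsv) P)
    (hcopy : ∀ i, IdentDistrib (fun ω => εsv ω i) (fun ω => εv 0 ω i) P P)
    {q K : ℝ} (hq : 1 ≤ q) (hK0 : 0 ≤ K) (hK : ∀ i, ∫ ω, |εv 0 ω i| ^ q ∂P ≤ K)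
    (c : Fin N → ℝ) :
    (eLpNorm (fun ω => c ⬝ᵥ (εv 0 ω - εsv ω)) (ENNReal.ofReal q) P).toReal ≤
      ∑ i, |c i| * (2 * K ^ (1 / q)) := by
  have hbound : 0 ≤ ∑ i, |c i| * (2 * K ^ (1 / q)) :=
    Finset.sum_nonneg fun i _ => by have := Real.rpow_nonneg hK0 (1 / q); positivity
  by_cases hY : MemLp (fun ω => c ⬝ᵥ (εv 0 ω - εsv ω)) (ENNReal.ofReal q) P
  · exact ENNReal.toReal_le_of_le_ofReal hbound
      (eLpNorm_dotProduct_coupling_le hmeas hmeas' hindep hcopy hq hK0 hK hY)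
  · have htop : eLpNorm (fun ω => c ⬝ᵥ (εv 0 ω - εsv ω)) (ENNReal.ofReal q) P = ∞ :=
      not_lt_top_iff.mp fun h => hY ⟨((measurable_dotProduct_coupling c).mono
        (innovσ_le hmeas hmeas' _) le_rfl).aestronglyMeasurable, h⟩
    rwa [htop, ENNReal.toReal_top]

theorem lqNorm_indicator_summable_le (hmeas : ∀ t, Measurable (εv t))
    (hmeas' : Measurable εsv) (hindep : iIndepFun (innov εv εsv) P) {q : ℝ} (hq : 0 < q)
    (B : ℕ → Matrix (Fin N) (Fin N) ℝ) (k : ℕ) (c : Fin N → ℝ) :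
    lqNorm P q ({ω | Summable fun j : ℕ => (B j).mulVec (εv ((k : ℤ) - j) ω)}.indicator
        fun ω => c ⬝ᵥ (εv 0 ω - εsv ω)) ≤
      (eLpNorm (fun ω => c ⬝ᵥ (εv 0 ω - εsv ω)) (ENNReal.ofReal q) P).toReal := by
  have hle := innovσ_le hmeas hmeas'
  have hY := measurable_dotProduct_coupling (εv := εv) (εsv := εsv) c
  have hS := measurableSet_summable_innovσ (εv := εv) (εsv := εsv) B k
  rw [lqNorm_eq_toReal_eLpNorm hq
    ((hY.mono (hle _) le_rfl).indicator (hle _ _ hS)).aestronglyMeasurable]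
  exact toReal_eLpNorm_indicator_le_of_indep (hle _) (hle _)
    (indep_innovσ_compl hmeas hmeas' hindep _) hY hS (by simpa using hq) ENNReal.ofReal_ne_top

end Innovations

end GPY

theorem statement_12_general
    {Ω : Type*} [MeasurableSpace Ω]
    (P : MeasureTheory.Measure Ω) [MeasureTheory.IsProbabilityMeasure P]
    (N : ℕ)
    (B : ℕ → Matrix (Fin N) (Fin N) ℝ)
    (εv : ℤ → Ω → Fin N → ℝ) (εsv : Ω → Fin N → ℝ)
    (hmeas : ∀ t, Measurable (εv t)) (hmeas' : Measurable εsv)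
    -- `{ε_{it}}` together with the copy `ε*_0` is an independent family over `i, t`
    (hindep : ProbabilityTheory.iIndepFun
      (fun (ki : (ℤ ⊕ Unit) × Fin N) (ω : Ω) => Sum.elim εv (fun _ => εsv) ki.1 ω ki.2) P)
    -- `ε*_0` is a copy of `ε_0`
    (hcopy : ∀ i, ProbabilityTheory.IdentDistrib (fun ω => εsv ω i) (fun ω => εv 0 ω i) P P)
    (q : ℝ) (hq : 2 < q)
    (hmom : ∃ K : ℝ, ∀ t i, (∫ ω, |εv t ω i| ^ q ∂P) ≤ K)
    (αe : ℝ)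
    (hB : ∃ CB : ℝ, 0 < CB ∧ ∀ j : ℕ, 1 ≤ j → specNorm (B j) ≤ CB * (j : ℝ) ^ (-αe)) :
    ∃ C : ℝ, 0 < C ∧ ∀ k : ℕ, 1 ≤ k →
      lqNorm P q (fun ω => (Real.sqrt N)⁻¹ * ∑ i,
          ((∑' j : ℕ, (B j).mulVec (εv ((k : ℤ) - j) ω)) i -
            (∑' j : ℕ, (B j).mulVec
              (fun i' => if (k : ℤ) - j = 0 then εsv ω i' else εv ((k : ℤ) - j) ω i')) i)) ≤
        C * (k : ℝ) ^ (-αe) := by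
  obtain ⟨K, hK⟩ := hmom
  obtain ⟨CB, -, hBk⟩ := hB
  set M := 2 * max K 0 ^ (1 / q)
  set C₀ := (Real.sqrt N)⁻¹ * (N * (N * CB)) * M
  refine ⟨max C₀ 1, by positivity, fun k hk => ?_⟩
  set c : Fin N → ℝ := (Real.sqrt N)⁻¹ • (1 ᵥ* B k)
  rw [mul_sum_tsum_sub_tsum_coupled]
  calc _ ≤ (eLpNorm (fun ω => c ⬝ᵥ (εv 0 ω - εsv ω)) (ENNReal.ofReal q) P).toReal :=
        lqNorm_indicator_summable_le hmeas hmeas' hindep (by linarith) B k c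
    _ ≤ ∑ i, |c i| * M :=
        toReal_eLpNorm_dotProduct_coupling_le hmeas hmeas' hindep hcopy (by linarith)
          (le_max_right _ _) (fun i => (hK 0 i).trans (le_max_left _ _)) c
    _ ≤ (Real.sqrt N)⁻¹ * (N * (N * specNorm (B k))) * M := by
        rw [← Finset.sum_mul]
        gcongr
        have h := sum_abs_smul_one_vecMul_le (Real.sqrt N)⁻¹ (B k)
        rwa [abs_of_nonneg (by positivity), Fintype.card_fin] at h
    _ ≤ (Real.sqrt N)⁻¹ * (N * (N * (CB * (k : ℝ) ^ (-αe)))) * M := by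
        gcongr
        exact hBk k hk
    _ = C₀ * (k : ℝ) ^ (-αe) := by ring
    _ ≤ max C₀ 1 * (k : ℝ) ^ (-αe) := by gcongr; exact le_max_left _ _

/-- Example A.1.1: functional dependence measure of a
high-dimensional MA(∞) process. -/
theorem statement_12
    {Ω : Type*} [MeasurableSpace Ω]
    (P : MeasureTheory.Measure Ω) [MeasureTheory.IsProbabilityMeasure P]
    (N : ℕ) (hN : 1 ≤ N)
    (B : ℕ → Matrix (Fin N) (Fin N) ℝ)
    (εv : ℤ → Ω → Fin N → ℝ) (εsv : Ω → Fin N → ℝ)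
    (hmeas : ∀ t, Measurable (εv t)) (hmeas' : Measurable εsv)
    -- `{ε_{it}}` together with the copy `ε*_0` is an independent family over `i, t`
    (hindep : ProbabilityTheory.iIndepFun
      (fun (ki : (ℤ ⊕ Unit) × Fin N) (ω : Ω) => Sum.elim εv (fun _ => εsv) ki.1 ω ki.2) P)
    -- `ε*_0` is a copy of `ε_0`
    (hcopy : ∀ i, ProbabilityTheory.IdentDistrib (fun ω => εsv ω i) (fun ω => εv 0 ω i) P P)
    (hmean : ∀ t i, ∫ ω, εv t ω i ∂P = 0)
    (q : ℝ) (hq : 2 < q)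
    (hmom : ∃ K : ℝ, ∀ t i, (∫ ω, |εv t ω i| ^ q ∂P) ≤ K)
    (αe : ℝ) (hαe : 2 < αe)
    (hB : ∃ CB : ℝ, 0 < CB ∧ ∀ j : ℕ, 1 ≤ j → specNorm (B j) ≤ CB * (j : ℝ) ^ (-αe)) :
    ∃ C : ℝ, 0 < C ∧ ∀ k : ℕ, 1 ≤ k →
      lqNorm P q (fun ω => (Real.sqrt N)⁻¹ * ∑ i,
          ((∑' j : ℕ, (B j).mulVec (εv ((k : ℤ) - j) ω)) i -
            (∑' j : ℕ, (B j).mulVec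
              (fun i' => if (k : ℤ) - j = 0 then εsv ω i' else εv ((k : ℤ) - j) ω i')) i)) ≤
        C * (k : ℝ) ^ (-αe) :=
  statement_12_general P N B εv εsv hmeas hmeas' hindep hcopy q hq hmom αe hB
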